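/- Let T be a triangulated category satisfying the octahedral axiom, P a connective class of objects closed under isomorphisms and finite direct sums containing 0, and I ⊆ P a subclass closed under isomorphisms and finite direct sums containing 0. Fix d ≥ 1. Set A^{(d)} := (P ∗ ΣP ∗ ⋯ ∗ Σ^d P) ∩ { X : Hom_T(X, Σ^m I') = 0 for all I' ∈ I, m ≥ 1 }, for 0 ≤ i ≤ d set B^{(i)} := (I ∗ ΣI ∗ ⋯ ∗ Σ^{i-1}I ∗ Σ^i P) ∩ { X : Hom_T(X, Σ^m I') = 0 for all I' ∈ I, m ≥ 1 } (with B^{(0)} := P ∩ the same kernel class), and let C^{(d)} be the union of the B^{(i)} for 0 ≤ i ≤ d. Then I is covariantly finite in A^{(d)} if and only if I is covariantly finite in C^{(d)}. -/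

import Mathlib

/-!
Padding with zero objects gives `B^{(i)} ⊆ P ∗ ΣP ∗ ⋯ ∗ Σ^i P ⊆ P ∗ ΣP ∗ ⋯ ∗ Σ^d P`, hence one
direction. For the other, call `X ∈ extKer I` `k`-coresolvable if it has a left
`I`-approximation `X ⟶ I₀` whose cone is `(k - 1)`-coresolvable (the cone lies in `extKer I`
automatically). The cone of a left approximation of an object of `B^{(j)}` lies in
`I ∗ Σ B^{(j)} = B^{(j + 1)}`, so objects of `B^{(j)} ∩ extKer I` are `(d - j)`-coresolvable.
Coresolvability is closed under extensions (horseshoe lemma: glued approximations have as cone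
an extension of the two cones) and under removing direct summands lying in `I`. Now write
`X ∈ P ∗ Σ(P ∗ ⋯ ∗ Σ^{n-1} P)` as a triangle `X' ⟶ P₀ ⟶ X ⟶ ΣX'`; by induction `X'` has a left
approximation `X' ⟶ I₁` with `(d - n)`-coresolvable cone `Q`, and since `Hom(X, ΣI₁) = 0` the
homotopy pushout is a triangle `P₀ ⟶ X ⊞ I₁ ⟶ Q ⟶ ΣP₀`. Hence `X` is `(d - n)`-coresolvable,
and `n = d` yields the left approximations.
-/

set_option linter.unusedSectionVars false

open CategoryTheory Limits Pretriangulated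

universe v u

namespace AuslanderIyamaStmt5

variable {C : Type u} [Category.{v} C] [HasZeroObject C] [HasShift C ℤ] [Preadditive C]
  [∀ n : ℤ, (shiftFunctor C n).Additive] [Pretriangulated C] [HasBinaryBiproducts C]

/-- `S₁ ∗ S₂`: objects `Y` fitting in a distinguished triangle `X ⟶ Y ⟶ Z ⟶ X⟦1⟧`
with `X ∈ S₁` and `Z ∈ S₂`. -/
def star (S₁ S₂ : Set C) : Set C :=
  {Y | ∃ (X Z : C) (f : X ⟶ Y) (g : Y ⟶ Z) (h : Z ⟶ X⟦(1 : ℤ)⟧),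
    (Triangle.mk f g h ∈ distTriang C) ∧ X ∈ S₁ ∧ Z ∈ S₂}

/-- `Σⁿ S`, closed under isomorphism. -/
def shiftSet (n : ℤ) (S : Set C) : Set C :=
  {X | ∃ Y ∈ S, Nonempty (X ≅ Y⟦n⟧)}

/-- `V n = P ∗ ΣP ∗ ⋯ ∗ Σⁿ P` (associated to the left; by the octahedral axiom `∗` is
associative so the grouping is irrelevant). -/
def V (P : Set C) : ℕ → Set C
  | 0 => P
  | n + 1 => star (V P n) (shiftSet ((n : ℤ) + 1) P)

/-- The kernel class `{X : Hom(X, Σ^m I') = 0 for all I' ∈ I, m ≥ 1}`. -/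
def extKer (I : Set C) : Set C :=
  {X | ∀ I' ∈ I, ∀ m : ℤ, 1 ≤ m → ∀ f : X ⟶ I'⟦m⟧, f = 0}

/-- `B I P 0 = P` and `B I P i = I ∗ ΣI ∗ ⋯ ∗ Σ^{i-1}I ∗ Σ^i P` for `i ≥ 1`. -/
def B (I P : Set C) : ℕ → Set C
  | 0 => P
  | i + 1 => star (V I i) (shiftSet ((i : ℤ) + 1) P)

/-- `I` is covariantly finite in `S`: every `X ∈ S` admits a left `I`-approximation. -/
def CovFin (I S : Set C) : Prop :=
  ∀ X ∈ S, ∃ I₀ ∈ I, ∃ f : X ⟶ I₀, ∀ I' ∈ I, ∀ g : X ⟶ I', ∃ h : I₀ ⟶ I', f ≫ h = g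

lemma shift_neg_one_hom_eq_zero {Q W : C} (h : ∀ g : Q ⟶ W⟦(1 : ℤ)⟧, g = 0)
    (f : Q⟦(-1 : ℤ)⟧ ⟶ W) : f = 0 := by
  apply (shiftFunctor C (1 : ℤ)).map_injective
  rw [Functor.map_zero,
    ← cancel_epi ((shiftFunctorCompIsoId C (-1 : ℤ) 1 (by norm_num)).inv.app Q), comp_zero]
  exact h _

lemma shift_one_hom_eq_zero {A W : C} {m : ℤ} (h : ∀ g : A ⟶ W⟦m⟧, g = 0)
    (f : A⟦(1 : ℤ)⟧ ⟶ W⟦m + 1⟧) : f = 0 := by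
  rw [← cancel_mono ((shiftFunctorAdd' C m 1 (m + 1) rfl).hom.app W), zero_comp,
    ← (shiftFunctor C (1 : ℤ)).map_preimage (f ≫ _), h ((shiftFunctor C (1 : ℤ)).preimage _),
    Functor.map_zero]

section Triangles

variable {X₁ X₂ X₃ : C} {f : X₁ ⟶ X₂} {g : X₂ ⟶ X₃} {h : X₃ ⟶ X₁⟦(1 : ℤ)⟧}

lemma distinguished_replace_obj₁ (hT : Triangle.mk f g h ∈ distTriang C) {Y : C} (e : X₁ ≅ Y) :
    Triangle.mk (e.inv ≫ f) g (h ≫ e.hom⟦(1 : ℤ)⟧') ∈ distTriang C :=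
  isomorphic_distinguished _ hT _ <|
    Triangle.isoMk _ _ e.symm (Iso.refl _) (Iso.refl _) (by simp [Triangle.mk])
      (by simp [Triangle.mk]) (by simp [Triangle.mk, ← Functor.map_comp])

lemma distinguished_replace_obj₂ (hT : Triangle.mk f g h ∈ distTriang C) {Y : C} (e : X₂ ≅ Y) :
    Triangle.mk (f ≫ e.hom) (e.inv ≫ g) h ∈ distTriang C :=
  isomorphic_distinguished _ hT _ <|
    Triangle.isoMk _ _ (Iso.refl _) e.symm (Iso.refl _) (by simp [Triangle.mk])
      (by simp [Triangle.mk]) (by simp [Triangle.mk])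

lemma distinguished_replace_obj₃ (hT : Triangle.mk f g h ∈ distTriang C) {Y : C} (e : X₃ ≅ Y) :
    Triangle.mk f (g ≫ e.hom) (e.inv ≫ h) ∈ distTriang C :=
  isomorphic_distinguished _ hT _ <|
    Triangle.isoMk _ _ (Iso.refl _) (Iso.refl _) e.symm (by simp [Triangle.mk])
      (by simp [Triangle.mk]) (by simp [Triangle.mk])

lemma exists_distinguished_desuspend (hT : Triangle.mk f g h ∈ distTriang C) {S : C}
    (e : X₃ ≅ S⟦(1 : ℤ)⟧) :
    ∃ (δ : S ⟶ X₁) (g' : X₂ ⟶ S⟦(1 : ℤ)⟧), Triangle.mk δ f g' ∈ distTriang C :=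
  ⟨_, _, distinguished_replace_obj₁
    (inv_rot_of_distTriang _ (distinguished_replace_obj₃ hT e))
    ((shiftFunctorCompIsoId C (1 : ℤ) (-1) (by norm_num)).app S)⟩

lemma nonempty_iso_biprod_of_mor₂_eq_zero (hT : Triangle.mk f (0 : X₂ ⟶ X₃) h ∈ distTriang C) :
    Nonempty (X₁ ≅ X₃⟦(-1 : ℤ)⟧ ⊞ X₂) := by
  obtain ⟨e, -, -⟩ := exists_iso_binaryBiproduct_of_distTriang _ (inv_rot_of_distTriang _ hT)
    (by simp [Triangle.invRotate]; exact zero_comp)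
  exact ⟨e⟩

lemma nonempty_iso_biprod_of_mor₁_eq_zero (hT : Triangle.mk (0 : X₁ ⟶ X₂) g h ∈ distTriang C) :
    Nonempty (X₃ ≅ X₂ ⊞ X₁⟦(1 : ℤ)⟧) := by
  obtain ⟨e, -, -⟩ := exists_iso_binaryBiproduct_of_distTriang _ (rot_of_distTriang _ hT)
    (show -((0 : X₁ ⟶ X₂)⟦(1 : ℤ)⟧') = 0 by simp)
  exact ⟨e⟩

end Triangles

lemma exists_distinguished_biprod_map_id (W : C) {N Y Q : C} {f : N ⟶ Y} {p : Y ⟶ Q}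
    {q : Q ⟶ N⟦(1 : ℤ)⟧} (hT : Triangle.mk f p q ∈ distTriang C) :
    ∃ (p' : W ⊞ Y ⟶ Q) (q' : Q ⟶ (W ⊞ N)⟦(1 : ℤ)⟧),
      Triangle.mk (biprod.map (𝟙 W) f) p' q' ∈ distTriang C := by
  obtain ⟨Z, g, h, hT'⟩ := distinguished_cocone_triangle (biprod.map (𝟙 W) f)
  -- `ι`, `π` include and project the second summand, `ιW`, `πW` the first one (with cone `0`).
  -- `ι ≫ π` and `π ≫ ι + πW ≫ ιW` are the identity on the first two objects, hence
  -- isomorphisms, and `πW.hom₃ = 0`; so `ι.hom₃ : Q ⟶ Z` has a left and a right inverse.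
  let ι := completeDistinguishedTriangleMorphism _ _ hT hT' biprod.inr biprod.inr
    (by simp [Triangle.mk])
  let π := completeDistinguishedTriangleMorphism _ _ hT' hT biprod.snd biprod.snd
    (by simp [Triangle.mk])
  let ιW := completeDistinguishedTriangleMorphism _ _ (contractible_distinguished W) hT'
    biprod.inl biprod.inl (by simp [contractibleTriangle, Triangle.mk])
  let πW := completeDistinguishedTriangleMorphism _ _ hT' (contractible_distinguished W)
    biprod.fst biprod.fst (by simp [contractibleTriangle, Triangle.mk])
  have e₁ : (ι ≫ π).hom₁ = 𝟙 _ := biprod.inr_snd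
  have e₂ : (ι ≫ π).hom₂ = 𝟙 _ := biprod.inr_snd
  have hιπ : IsIso (ι.hom₃ ≫ π.hom₃) :=
    isIso₃_of_isIso₁₂ (ι ≫ π) hT hT (e₁ ▸ inferInstance) (e₂ ▸ inferInstance)
  have e₁' : (π ≫ ι + πW ≫ ιW).hom₁ = 𝟙 _ := (add_comm _ _).trans biprod.total
  have e₂' : (π ≫ ι + πW ≫ ιW).hom₂ = 𝟙 _ := (add_comm _ _).trans biprod.total
  have hsum : IsIso (π ≫ ι + πW ≫ ιW).hom₃ :=
    isIso₃_of_isIso₁₂ _ hT' hT' (e₁' ▸ inferInstance) (e₂' ▸ inferInstance)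
  have hπι : IsIso (π.hom₃ ≫ ι.hom₃) := by
    have hπW : πW.hom₃ = 0 := (isZero_zero C).eq_zero_of_tgt _
    simpa [hπW] using hsum
  have : Mono ι.hom₃ := mono_of_mono _ π.hom₃
  have : IsSplitEpi ι.hom₃ := ⟨⟨⟨inv (π.hom₃ ≫ ι.hom₃) ≫ π.hom₃, by simp⟩⟩⟩
  have : IsIso ι.hom₃ := isIso_of_mono_of_isSplitEpi _
  exact ⟨_, _, distinguished_replace_obj₃ hT' (asIso ι.hom₃).symm⟩

lemma biprod_fst_distinguished (X₁ X₂ : C) :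
    Triangle.mk (biprod.fst : X₁ ⊞ X₂ ⟶ X₁) 0 (-(biprod.inr : X₂ ⟶ X₁ ⊞ X₂)⟦(1 : ℤ)⟧') ∈
      distTriang C := by
  have h : Triangle.mk (biprod.inl : X₂ ⟶ X₂ ⊞ X₁) biprod.snd 0 ∈ distTriang C :=
    binaryBiproductTriangle_distinguished X₂ X₁
  refine isomorphic_distinguished _ (rot_of_distTriang _ h) _
    (Triangle.isoMk _ _ (biprod.braiding X₁ X₂) (Iso.refl _) (Iso.refl _) ?_ ?_ ?_)
  · simp [Triangle.rotate, Triangle.mk]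
  · simp [Triangle.rotate, Triangle.mk]
  · simp only [Triangle.rotate, Triangle.mk]
    have : (biprod.inr : X₂ ⟶ X₁ ⊞ X₂) ≫ biprod.lift biprod.snd biprod.fst = biprod.inl := by
      ext <;> simp
    simp [← Functor.map_comp, this]

lemma star_mono {S₁ S₂ S₁' S₂' : Set C} (h₁ : S₁ ⊆ S₁') (h₂ : S₂ ⊆ S₂') :
    star S₁ S₂ ⊆ star S₁' S₂' := by
  rintro Y ⟨X, Z, f, g, h, hT, hX, hZ⟩
  exact ⟨X, Z, f, g, h, hT, h₁ hX, h₂ hZ⟩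

lemma shiftSet_mono {S S' : Set C} (h : S ⊆ S') (n : ℤ) : shiftSet n S ⊆ shiftSet n S' := by
  rintro X ⟨Y, hY, e⟩
  exact ⟨Y, h hY, e⟩

lemma shift_mem_shiftSet {S : Set C} {X : C} (h : X ∈ S) (n : ℤ) : X⟦n⟧ ∈ shiftSet n S :=
  ⟨X, h, ⟨Iso.refl _⟩⟩

lemma shiftSet_shiftSet (a b : ℤ) (S : Set C) :
    shiftSet a (shiftSet b S) = shiftSet (b + a) S := by
  ext X
  constructor
  · rintro ⟨Y, ⟨Z, hZ, ⟨e₂⟩⟩, ⟨e₁⟩⟩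
    exact ⟨Z, hZ, ⟨e₁ ≪≫ (shiftFunctor C a).mapIso e₂ ≪≫
      ((shiftFunctorAdd' C b a (b + a) rfl).app Z).symm⟩⟩
  · rintro ⟨Z, hZ, ⟨e⟩⟩
    exact ⟨Z⟦b⟧, shift_mem_shiftSet hZ b, ⟨e ≪≫ (shiftFunctorAdd' C b a (b + a) rfl).app Z⟩⟩

lemma shiftSet_star (n : ℤ) (S₁ S₂ : Set C) :
    shiftSet n (star S₁ S₂) = star (shiftSet n S₁) (shiftSet n S₂) := by
  ext X
  constructor
  · rintro ⟨Y, ⟨A, Z, f, g, h, hT, hA, hZ⟩, ⟨e⟩⟩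
    exact ⟨A⟦n⟧, Z⟦n⟧, _, _, _,
      distinguished_replace_obj₂ (Triangle.shift_distinguished _ hT n) e.symm,
      shift_mem_shiftSet hA n, shift_mem_shiftSet hZ n⟩
  · rintro ⟨A', Z', f, g, h, hT, ⟨A, hA, ⟨eA⟩⟩, ⟨Z, hZ, ⟨eZ⟩⟩⟩
    have hT' := Triangle.shift_distinguished _
      (distinguished_replace_obj₃ (distinguished_replace_obj₁ hT eA) eZ) (-n)
    refine ⟨X⟦-n⟧, ⟨A, Z, _, _, _, distinguished_replace_obj₃
      (distinguished_replace_obj₁ hT' ((shiftFunctorCompIsoId C n (-n) (by ring)).app A))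
      ((shiftFunctorCompIsoId C n (-n) (by ring)).app Z), hA, hZ⟩,
      ⟨((shiftFunctorCompIsoId C (-n) n (by ring)).app X).symm⟩⟩

lemma star_assoc [IsTriangulated C] (S₁ S₂ S₃ : Set C) :
    star (star S₁ S₂) S₃ = star S₁ (star S₂ S₃) := by
  ext Y
  constructor
  · rintro ⟨E, Z₃, f, g, h, hT, ⟨X₁, Z₂, a, b, c, hTE, h₁, h₂⟩, h₃⟩
    obtain ⟨W, v, w, hW⟩ := distinguished_cocone_triangle (a ≫ f)
    have O := Triangulated.someOctahedron rfl hTE hT hW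
    exact ⟨X₁, W, a ≫ f, v, w, hW, h₁, ⟨Z₂, Z₃, _, _, _, O.mem, h₂, h₃⟩⟩
  · rintro ⟨X₁, F, f, g, h, hT, h₁, ⟨Z₂, Z₃, a, b, c, hTF, h₂, h₃⟩⟩
    obtain ⟨G, p, q, hG⟩ := distinguished_cocone_triangle (g ≫ b)
    have O := Triangulated.someOctahedron rfl (rot_of_distTriang _ hT)
      (rot_of_distTriang _ hTF) hG
    have hT' := Triangle.shift_distinguished _ O.mem (-1)
    have hGmem : G⟦(-1 : ℤ)⟧ ∈ star S₁ S₂ := ⟨X₁, Z₂, _, _, _, distinguished_replace_obj₃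
      (distinguished_replace_obj₁ hT' ((shiftFunctorCompIsoId C (1 : ℤ) (-1) (by ring)).app X₁))
      ((shiftFunctorCompIsoId C (1 : ℤ) (-1) (by ring)).app Z₂), h₁, h₂⟩
    exact ⟨G⟦(-1 : ℤ)⟧, Z₃, _, _, _, inv_rot_of_distTriang _ hG, hGmem, h₃⟩

lemma V_mono {S S' : Set C} (h : S ⊆ S') : ∀ n, V S n ⊆ V S' n
  | 0 => h
  | n + 1 => star_mono (V_mono h n) (shiftSet_mono h _)

open ZeroObject in
lemma V_monotone {P : Set C} (hPzero : ∀ ⦃X : C⦄, IsZero X → X ∈ P) : Monotone (V P) :=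
  monotone_nat_of_le_succ fun _ X hX =>
    ⟨X, 0, 𝟙 X, 0, 0, contractible_distinguished X, hX,
      ⟨0, hPzero (isZero_zero C), ⟨(isZero_zero C).iso (Functor.map_isZero _ (isZero_zero C))⟩⟩⟩

lemma star_shiftSet_V [IsTriangulated C] (S : Set C) :
    ∀ n, star S (shiftSet 1 (V S n)) = V S (n + 1)
  | 0 => by simp [V]
  | n + 1 => by
    rw [V, shiftSet_star, shiftSet_shiftSet, ← star_assoc, star_shiftSet_V S n, V]
    rfl

lemma star_shiftSet_B [IsTriangulated C] (I P : Set C) :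
    ∀ j, star I (shiftSet 1 (B I P j)) = B I P (j + 1)
  | 0 => by simp [B, V]
  | j + 1 => by
    rw [B, shiftSet_star, shiftSet_shiftSet, ← star_assoc, star_shiftSet_V I j, B]
    rfl

lemma B_subset_V {I P : Set C} (hIP : I ⊆ P) : ∀ i, B I P i ⊆ V P i
  | 0 => subset_rfl
  | i + 1 => star_mono (V_mono hIP i) subset_rfl

section Vanishing

variable {X₁ X₂ X₃ : C} {f : X₁ ⟶ X₂} {g : X₂ ⟶ X₃} {h : X₃ ⟶ X₁⟦(1 : ℤ)⟧} {W : C}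

lemma hom_eq_zero_of_distinguished₁ (hT : Triangle.mk f g h ∈ distTriang C)
    (h₂ : ∀ a : X₂ ⟶ W, a = 0) (h₃ : ∀ a : X₃ ⟶ W⟦(1 : ℤ)⟧, a = 0) (a : X₁ ⟶ W) : a = 0 := by
  obtain ⟨b, rfl⟩ := Triangle.yoneda_exact₂ _ (inv_rot_of_distTriang _ hT) a
    (shift_neg_one_hom_eq_zero h₃ _)
  simp only [h₂ b]
  exact comp_zero

lemma hom_eq_zero_of_distinguished₂ (hT : Triangle.mk f g h ∈ distTriang C)
    (h₁ : ∀ a : X₁ ⟶ W, a = 0) (h₃ : ∀ a : X₃ ⟶ W, a = 0) (a : X₂ ⟶ W) : a = 0 := by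
  obtain ⟨b, rfl⟩ := Triangle.yoneda_exact₂ _ hT a (h₁ _)
  simp only [h₃ b]
  exact comp_zero

end Vanishing

section ExtKer

variable {I : Set C}

lemma extKer_hom_shift_eq_zero {X I' : C} (hX : X ∈ extKer I) (hI' : I' ∈ I) {m : ℤ}
    (hm : 0 ≤ m) (a : X ⟶ I'⟦m⟧⟦(1 : ℤ)⟧) : a = 0 := by
  rw [← cancel_mono ((shiftFunctorAdd' C m 1 (m + 1) rfl).inv.app I'), zero_comp]
  exact hX I' hI' (m + 1) (by omega) _

lemma mem_extKer_of_iso {X Y : C} (hX : X ∈ extKer I) (e : X ≅ Y) : Y ∈ extKer I :=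
  fun I' hI' m hm a => by
    rw [← cancel_epi e.hom, comp_zero]
    exact hX I' hI' m hm _

variable {X₁ X₂ X₃ : C} {f : X₁ ⟶ X₂} {g : X₂ ⟶ X₃} {h : X₃ ⟶ X₁⟦(1 : ℤ)⟧}

lemma mem_extKer_of_distinguished₁ (hT : Triangle.mk f g h ∈ distTriang C)
    (h₂ : X₂ ∈ extKer I) (h₃ : X₃ ∈ extKer I) : X₁ ∈ extKer I :=
  fun I' hI' m hm => hom_eq_zero_of_distinguished₁ hT (h₂ I' hI' m hm)
    (extKer_hom_shift_eq_zero h₃ hI' (by omega))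

lemma mem_extKer_of_distinguished₂ (hT : Triangle.mk f g h ∈ distTriang C)
    (h₁ : X₁ ∈ extKer I) (h₃ : X₃ ∈ extKer I) : X₂ ∈ extKer I :=
  fun I' hI' m hm => hom_eq_zero_of_distinguished₂ hT (h₁ I' hI' m hm) (h₃ I' hI' m hm)

lemma biprod_mem_extKer {X Y : C} (hX : X ∈ extKer I) (hY : Y ∈ extKer I) :
    (X ⊞ Y) ∈ extKer I :=
  mem_extKer_of_distinguished₂ (binaryBiproductTriangle_distinguished X Y) hX hY

lemma mem_extKer_of_biprod {X Y : C} (h : (X ⊞ Y) ∈ extKer I) : X ∈ extKer I :=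
  fun I' hI' m hm a =>
    calc a = biprod.inl ≫ biprod.fst ≫ a := by simp
      _ = 0 := by rw [h I' hI' m hm (biprod.fst ≫ a), comp_zero]

end ExtKer

/-- `u` is `I`-monic: every morphism from its source to an object of `I` factors through it. -/
def IsIMonic (I : Set C) {X Y : C} (u : X ⟶ Y) : Prop :=
  ∀ I' ∈ I, ∀ g : X ⟶ I', ∃ h : Y ⟶ I', u ≫ h = g

namespace IsIMonic

variable {I : Set C} {X Y : C} {u : X ⟶ Y}

lemma of_distinguished {Q : C} {v : Y ⟶ Q} {w : Q ⟶ X⟦(1 : ℤ)⟧}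
    (hT : Triangle.mk u v w ∈ distTriang C) (hQ : ∀ I' ∈ I, ∀ a : Q ⟶ I'⟦(1 : ℤ)⟧, a = 0) :
    IsIMonic I u := fun I' hI' g => by
  obtain ⟨h, hh⟩ := Triangle.yoneda_exact₂ _ (inv_rot_of_distTriang _ hT) g
    (shift_neg_one_hom_eq_zero (hQ I' hI') _)
  exact ⟨h, hh.symm⟩

lemma iso_hom (e : X ≅ Y) : IsIMonic I e.hom :=
  fun _ _ g => ⟨e.inv ≫ g, by simp⟩

lemma comp (hu : IsIMonic I u) {Z : C} {v : Y ⟶ Z} (hv : IsIMonic I v) : IsIMonic I (u ≫ v) :=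
  fun I' hI' g => by
    obtain ⟨h, rfl⟩ := hu I' hI' g
    obtain ⟨h', rfl⟩ := hv I' hI' h
    exact ⟨h', by simp⟩

lemma biprod_inl_comp {J : C} {u : X ⊞ J ⟶ Y} (hu : IsIMonic I u) :
    IsIMonic I (biprod.inl ≫ u) := fun I' hI' g => by
  obtain ⟨h, hh⟩ := hu I' hI' (biprod.desc g 0)
  exact ⟨h, by simp [hh]⟩

lemma biprod_map_id (hu : IsIMonic I u) (J : C) : IsIMonic I (biprod.map (𝟙 J) u) :=
  fun I' hI' g => by
    obtain ⟨h, hh⟩ := hu I' hI' (biprod.inr ≫ g)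
    exact ⟨biprod.desc (biprod.inl ≫ g) h, by ext <;> simp [hh]⟩

lemma cone_mem_extKer (hu : IsIMonic I u) {Q : C} {p : Y ⟶ Q} {q : Q ⟶ X⟦(1 : ℤ)⟧}
    (hT : Triangle.mk u p q ∈ distTriang C) (hX : X ∈ extKer I) (hY : Y ∈ extKer I) :
    Q ∈ extKer I := by
  intro I' hI' m hm φ
  obtain ⟨ψ, rfl⟩ : ∃ ψ : X⟦(1 : ℤ)⟧ ⟶ I'⟦m⟧, φ = q ≫ ψ :=
    Triangle.yoneda_exact₃ _ hT φ (hY I' hI' m hm _)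
  obtain rfl | hm := hm.eq_or_lt
  · -- a map `X⟦1⟧ ⟶ I'⟦1⟧` is the shift of a map `X ⟶ I'`, which factors through `u`
    obtain ⟨t, ht⟩ := hu I' hI' ((shiftFunctor C (1 : ℤ)).preimage ψ)
    rw [← (shiftFunctor C (1 : ℤ)).map_preimage ψ, ← ht, Functor.map_comp]
    have hqu : q ≫ u⟦(1 : ℤ)⟧' = 0 := comp_distTriang_mor_zero₃₁ _ hT
    rw [reassoc_of% hqu, zero_comp]
  · obtain ⟨m, rfl⟩ : ∃ m', m = m' + 1 := ⟨m - 1, by ring⟩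
    rw [shift_one_hom_eq_zero (hX I' hI' m (by omega)) ψ, comp_zero]

end IsIMonic

lemma exists_horseshoe [IsTriangulated C] {I : Set C} {A M E : C} {f : A ⟶ M} {g : M ⟶ E}
    {h : E ⟶ A⟦(1 : ℤ)⟧} (hT : Triangle.mk f g h ∈ distTriang C) (hE : E ∈ extKer I)
    {IA Qα : C} (hIA : IA ∈ I) {α : A ⟶ IA} {pα : IA ⟶ Qα} {qα : Qα ⟶ A⟦(1 : ℤ)⟧}
    (hTα : Triangle.mk α pα qα ∈ distTriang C) (hQα : Qα ∈ extKer I)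
    {IB Qβ : C} {β : E ⟶ IB} (hβ : IsIMonic I β) {pβ : IB ⟶ Qβ} {qβ : Qβ ⟶ E⟦(1 : ℤ)⟧}
    (hTβ : Triangle.mk β pβ qβ ∈ distTriang C) :
    ∃ u : M ⟶ IA ⊞ IB, IsIMonic I u ∧
      ∃ (QM : C) (pM : IA ⊞ IB ⟶ QM) (qM : QM ⟶ M⟦(1 : ℤ)⟧),
        Triangle.mk u pM qM ∈ distTriang C ∧
      ∃ (a : Qα ⟶ QM) (b : QM ⟶ Qβ) (c : Qβ ⟶ Qα⟦(1 : ℤ)⟧),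
        Triangle.mk a b c ∈ distTriang C := by
  -- The connecting map `E⟦-1⟧ ⟶ A` dies after `α`; the octahedron on this composite gives a
  -- triangle `M ⟶ IA ⊞ E⟦-1⟧⟦1⟧ ⟶ Qα ⟶ M⟦1⟧` with `I`-monic first map. Following it by
  -- `𝟙 ⊞ β`, a second octahedron exhibits the cone as an extension of `Qβ` by `Qα`.
  have hδα : (Triangle.mk f g h).invRotate.mor₁ ≫ α = 0 :=
    shift_neg_one_hom_eq_zero (hE _ hIA 1 le_rfl) _
  obtain ⟨M₁, v, w, hT₀⟩ := distinguished_cocone_triangle (0 : E⟦(-1 : ℤ)⟧ ⟶ IA)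
  have O₁ := Triangulated.someOctahedron hδα (inv_rot_of_distTriang _ hT) hTα hT₀
  obtain ⟨e⟩ := nonempty_iso_biprod_of_mor₁_eq_zero hT₀
  let ε : E⟦(-1 : ℤ)⟧⟦(1 : ℤ)⟧ ≅ E := (shiftFunctorCompIsoId C (-1 : ℤ) 1 (by norm_num)).app E
  obtain ⟨p₂, q₂, hT₂⟩ :=
    exists_distinguished_biprod_map_id IA (distinguished_replace_obj₁ hTβ ε.symm)
  obtain ⟨QM, pM, qM, hTM⟩ :=
    distinguished_cocone_triangle ((O₁.m₁ ≫ e.hom) ≫ biprod.map (𝟙 IA) (ε.hom ≫ β))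
  have O₂ := Triangulated.someOctahedron rfl (distinguished_replace_obj₂ O₁.mem e) hT₂ hTM
  refine ⟨_, ?_, QM, pM, qM, hTM, _, _, _, O₂.mem⟩
  have hm₁ : IsIMonic I O₁.m₁ := .of_distinguished O₁.mem fun I' hI' => hQα I' hI' 1 le_rfl
  exact (hm₁.comp (.iso_hom e)).comp (((IsIMonic.iso_hom ε).comp hβ).biprod_map_id IA)

lemma exists_distinguished_biprod_of_common_fiber [IsTriangulated C] {S A M E Q : C}
    {δ : S ⟶ A} {f : A ⟶ M} {g : M ⟶ S⟦(1 : ℤ)⟧} (hT : Triangle.mk δ f g ∈ distTriang C)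
    {w : S ⟶ E} {p : E ⟶ Q} {q : Q ⟶ S⟦(1 : ℤ)⟧} (hTw : Triangle.mk w p q ∈ distTriang C)
    (hME : ∀ φ : M ⟶ E⟦(1 : ℤ)⟧, φ = 0) :
    ∃ (f' : A ⟶ M ⊞ E) (g' : M ⊞ E ⟶ Q) (h' : Q ⟶ A⟦(1 : ℤ)⟧),
      Triangle.mk f' g' h' ∈ distTriang C := by
  -- The cone `Y` of `S ⟶ A ⊞ E` is an extension of `Q` by `A` and of `M` by `E`; the latter
  -- splits since `Hom(M, E⟦1⟧) = 0`.
  obtain ⟨Y, v, t, hY⟩ := distinguished_cocone_triangle (biprod.lift δ w)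
  have O₁ := Triangulated.someOctahedron (biprod.lift_snd δ w) hY
    (rot_of_distTriang _ (binaryBiproductTriangle_distinguished A E)) hTw
  have O₂ := Triangulated.someOctahedron (biprod.lift_fst δ w) hY
    (biprod_fst_distinguished A E) hT
  have hmem := O₂.mem
  rw [hME O₂.m₃] at hmem
  obtain ⟨e⟩ := nonempty_iso_biprod_of_mor₂_eq_zero hmem
  exact ⟨_, _, _, distinguished_replace_obj₂ (distinguished_replace_obj₁
    (inv_rot_of_distTriang _ O₁.mem) ((shiftFunctorCompIsoId C (1 : ℤ) (-1) (by norm_num)).app A))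
    (e ≪≫ biprod.mapIso ((shiftFunctorCompIsoId C (1 : ℤ) (-1) (by norm_num)).app E) (Iso.refl M)
      ≪≫ biprod.braiding E M)⟩

/-- `X = X₀` has left `I`-approximations `Xᵢ ⟶ Iᵢ` for `i ≤ k`, where `Xᵢ₊₁` is the cone of
`Xᵢ ⟶ Iᵢ`, and all the `Xᵢ` lie in `extKer I`. -/
def Coresolvable (I : Set C) : ℕ → C → Prop
  | 0, X => X ∈ extKer I ∧ ∃ I₀ ∈ I, ∃ u : X ⟶ I₀, IsIMonic I u
  | k + 1, X => X ∈ extKer I ∧ ∃ I₀ ∈ I, ∃ u : X ⟶ I₀, IsIMonic I u ∧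
      ∃ (Q : C) (p : I₀ ⟶ Q) (q : Q ⟶ X⟦(1 : ℤ)⟧),
        Triangle.mk u p q ∈ distTriang C ∧ Coresolvable I k Q

namespace Coresolvable

variable {I : Set C}

lemma mem_extKer {k : ℕ} {X : C} (h : Coresolvable I k X) : X ∈ extKer I := by
  cases k <;> exact h.1

lemma exists_isIMonic {k : ℕ} {X : C} (h : Coresolvable I k X) :
    ∃ I₀ ∈ I, ∃ u : X ⟶ I₀, IsIMonic I u := by
  cases k with
  | zero => exact h.2
  | succ k => obtain ⟨-, I₀, hI₀, u, hu, -⟩ := h; exact ⟨I₀, hI₀, u, hu⟩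

lemma of_iso {k : ℕ} {X Y : C} (h : Coresolvable I k X) (e : X ≅ Y) : Coresolvable I k Y := by
  cases k with
  | zero =>
    obtain ⟨hX, I₀, hI₀, u, hu⟩ := h
    exact ⟨mem_extKer_of_iso hX e, I₀, hI₀, _, (IsIMonic.iso_hom e.symm).comp hu⟩
  | succ k =>
    obtain ⟨hX, I₀, hI₀, u, hu, Q, p, q, hT, hQ⟩ := h
    exact ⟨mem_extKer_of_iso hX e, I₀, hI₀, _, (IsIMonic.iso_hom e.symm).comp hu, Q, p, _,
      distinguished_replace_obj₁ hT e, hQ⟩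

lemma biprod_left (hI : I ⊆ extKer I) (hIsum : ∀ ⦃X Y : C⦄, X ∈ I → Y ∈ I → (X ⊞ Y) ∈ I)
    {k : ℕ} {J X : C} (hJ : J ∈ I) (h : Coresolvable I k X) :
    Coresolvable I k (J ⊞ X) := by
  cases k with
  | zero =>
    obtain ⟨hX, I₀, hI₀, u, hu⟩ := h
    exact ⟨biprod_mem_extKer (hI hJ) hX, J ⊞ I₀, hIsum hJ hI₀, _, hu.biprod_map_id J⟩
  | succ k =>
    obtain ⟨hX, I₀, hI₀, u, hu, Q, p, q, hT, hQ⟩ := h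
    obtain ⟨p', q', hT'⟩ := exists_distinguished_biprod_map_id J hT
    exact ⟨biprod_mem_extKer (hI hJ) hX, J ⊞ I₀, hIsum hJ hI₀, _, hu.biprod_map_id J,
      Q, p', q', hT', hQ⟩

lemma of_biprod [IsTriangulated C] (hI : I ⊆ extKer I)
    (hIsum : ∀ ⦃X Y : C⦄, X ∈ I → Y ∈ I → (X ⊞ Y) ∈ I) {k : ℕ} {X J : C} (hJ : J ∈ I)
    (h : Coresolvable I k (X ⊞ J)) : Coresolvable I k X := by
  cases k with
  | zero =>
    obtain ⟨hXJ, I₀, hI₀, u, hu⟩ := h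
    exact ⟨mem_extKer_of_biprod hXJ, I₀, hI₀, _, hu.biprod_inl_comp⟩
  | succ k =>
    obtain ⟨hXJ, I₀, hI₀, u, hu, Q, p, q, hT, hQ⟩ := h
    obtain ⟨Q', p', q', hT'⟩ := distinguished_cocone_triangle (biprod.inl ≫ u)
    have O := Triangulated.someOctahedron rfl (binaryBiproductTriangle_distinguished X J) hT hT'
    obtain ⟨e, -, -⟩ := exists_iso_binaryBiproduct_of_distTriang _ O.mem
      (hQ.mem_extKer J hJ 1 le_rfl (q ≫ (biprod.snd : X ⊞ J ⟶ J)⟦(1 : ℤ)⟧'))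
    exact ⟨mem_extKer_of_biprod hXJ, I₀, hI₀, _, hu.biprod_inl_comp, Q', p', q', hT',
      (hQ.biprod_left hI hIsum hJ).of_iso e.symm⟩

lemma of_distinguished₂ [IsTriangulated C] (hI : I ⊆ extKer I)
    (hIsum : ∀ ⦃X Y : C⦄, X ∈ I → Y ∈ I → (X ⊞ Y) ∈ I) :
    ∀ {k : ℕ} {A M E : C} {f : A ⟶ M} {g : M ⟶ E} {h : E ⟶ A⟦(1 : ℤ)⟧},
      Triangle.mk f g h ∈ distTriang C → Coresolvable I k A → Coresolvable I k E →
        Coresolvable I k M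
  | 0, _, _, _, _, _, _, hT, ⟨hA, _, hIA, α, hα⟩, ⟨hE, _, hIB, β, hβ⟩ => by
    obtain ⟨Qα, pα, qα, hTα⟩ := distinguished_cocone_triangle α
    obtain ⟨Qβ, pβ, qβ, hTβ⟩ := distinguished_cocone_triangle β
    obtain ⟨u, hu, -⟩ :=
      exists_horseshoe hT hE hIA hTα (hα.cone_mem_extKer hTα hA (hI hIA)) hβ hTβ
    exact ⟨mem_extKer_of_distinguished₂ hT hA hE, _, hIsum hIA hIB, u, hu⟩
  | _ + 1, _, _, _, _, _, _, hT, ⟨hA, _, hIA, _, _, _, _, _, hTα, hQα⟩,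
      ⟨hE, _, hIB, _, hβ, _, _, _, hTβ, hQβ⟩ => by
    obtain ⟨u, hu, QM, pM, qM, hTM, _, _, _, hTQ⟩ :=
      exists_horseshoe hT hE hIA hTα hQα.mem_extKer hβ hTβ
    exact ⟨mem_extKer_of_distinguished₂ hT hA hE, _, hIsum hIA hIB, u, hu, QM, pM, qM, hTM,
      of_distinguished₂ hI hIsum hTQ hQα hQβ⟩

variable {P : Set C} {d : ℕ}

lemma of_mem_B [IsTriangulated C] (hI : I ⊆ extKer I)
    (hC : CovFin I {X | ∃ i ≤ d, X ∈ B I P i ∩ extKer I}) :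
    ∀ k j, j + k ≤ d → ∀ {X : C}, X ∈ B I P j → X ∈ extKer I → Coresolvable I k X
  | 0, j, hjk, X, hXB, hX => ⟨hX, hC X ⟨j, by omega, hXB, hX⟩⟩
  | k + 1, j, hjk, X, hXB, hX => by
    obtain ⟨I₀, hI₀, u, hu⟩ := hC X ⟨j, by omega, hXB, hX⟩
    obtain ⟨Q, p, q, hTQ⟩ := distinguished_cocone_triangle u
    have hQB : Q ∈ B I P (j + 1) := by
      rw [← star_shiftSet_B]
      exact ⟨I₀, X⟦(1 : ℤ)⟧, p, q, _, rot_of_distTriang _ hTQ, hI₀, shift_mem_shiftSet hXB 1⟩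
    exact ⟨hX, I₀, hI₀, u, hu, Q, p, q, hTQ,
      of_mem_B hI hC k (j + 1) (by omega) hQB (IsIMonic.cone_mem_extKer hu hTQ hX (hI hI₀))⟩

lemma of_mem_V [IsTriangulated C] (hI : I ⊆ extKer I) (hP : P ⊆ extKer I)
    (hIsum : ∀ ⦃X Y : C⦄, X ∈ I → Y ∈ I → (X ⊞ Y) ∈ I)
    (hC : CovFin I {X | ∃ i ≤ d, X ∈ B I P i ∩ extKer I}) :
    ∀ n k, n + k = d → ∀ {X : C}, X ∈ V P n → X ∈ extKer I → Coresolvable I k X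
  | 0, k, hnk, _, hX, hXker => of_mem_B hI hC k 0 (by omega) hX hXker
  | n + 1, k, hnk, X, hX, hXker => by
    rw [← star_shiftSet_V] at hX
    obtain ⟨P₀, Z, f, g, h, hT, hP₀, X', hX', ⟨e⟩⟩ := hX
    obtain ⟨δ, g', hT'⟩ := exists_distinguished_desuspend hT e
    have hX'ker := mem_extKer_of_distinguished₁ hT' (hP hP₀) hXker
    obtain ⟨-, I₁, hI₁, _, -, Q, _, _, hTQ, hQ⟩ :=
      of_mem_V hI hP hIsum hC n (k + 1) (by omega) hX' hX'ker
    obtain ⟨_, _, _, hTP⟩ :=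
      exists_distinguished_biprod_of_common_fiber hT' hTQ (hXker I₁ hI₁ 1 le_rfl)
    have hP₀' := of_mem_B hI hC k 0 (by omega) hP₀ (hP hP₀)
    exact (of_distinguished₂ hI hIsum hTP hP₀' hQ).of_biprod hI hIsum hI₁

end Coresolvable

theorem statement5_general [IsTriangulated C] (d : ℕ) (P I : Set C) (hIP : I ⊆ P)
    (hPzero : ∀ ⦃X : C⦄, IsZero X → X ∈ P)
    (hPconn : ∀ ⦃X Y : C⦄, X ∈ P → Y ∈ P → ∀ n : ℤ, 1 ≤ n → ∀ f : X ⟶ Y⟦n⟧, f = 0)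
    (hIsum : ∀ ⦃X Y : C⦄, X ∈ I → Y ∈ I → (X ⊞ Y) ∈ I) :
    CovFin I (V P d ∩ extKer I) ↔
      CovFin I {X | ∃ i ≤ d, X ∈ B I P i ∩ extKer I} := by
  have hP : P ⊆ extKer I := fun _ hX I' hI' => hPconn hX (hIP hI')
  constructor
  · rintro hA X ⟨i, hi, hXB, hX⟩
    exact hA X ⟨V_monotone hPzero hi (B_subset_V hIP i hXB), hX⟩
  · rintro hC X ⟨hXV, hX⟩
    exact (Coresolvable.of_mem_V (hIP.trans hP) hP hIsum hC d 0 rfl hXV hX).exists_isIMonic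

theorem statement5 [IsTriangulated C] (d : ℕ) (hd : 1 ≤ d) (P I : Set C) (hIP : I ⊆ P)
    (hPiso : ∀ ⦃X Y : C⦄, (X ≅ Y) → X ∈ P → Y ∈ P)
    (hPsum : ∀ ⦃X Y : C⦄, X ∈ P → Y ∈ P → (X ⊞ Y) ∈ P)
    (hPzero : ∀ ⦃X : C⦄, IsZero X → X ∈ P)
    (hPconn : ∀ ⦃X Y : C⦄, X ∈ P → Y ∈ P → ∀ n : ℤ, 1 ≤ n → ∀ f : X ⟶ Y⟦n⟧, f = 0)
    (hIiso : ∀ ⦃X Y : C⦄, (X ≅ Y) → X ∈ I → Y ∈ I)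
    (hIsum : ∀ ⦃X Y : C⦄, X ∈ I → Y ∈ I → (X ⊞ Y) ∈ I)
    (hIzero : ∀ ⦃X : C⦄, IsZero X → X ∈ I) :
    CovFin I (V P d ∩ extKer I) ↔
      CovFin I {X | ∃ i ≤ d, X ∈ B I P i ∩ extKer I} :=
  statement5_general d P I hIP hPzero hPconn hIsum

end AuslanderIyamaStmt5
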